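/- arXiv:1006.5124 — 3 statements merged into one kernel-verified Lean document; each statement's English description precedes it below -/
import Mathlib

section
/- Let r, l be positive integers and let (v₁,…,v_r) and (w₁,…,w_l) be sequences of nonnegative integers with Σv_i = Σw_j = N ≤ r·l, such that each v_i ∈ {v, v+1} where v = ⌊N/r⌋ and each w_j ∈ {w, w+1} where w = ⌊N/l⌋. Then there exists a bipartite graph on r right vertices and l left vertices whose right degree sequence is (v₁,…,v_r) and whose left degree sequence is (w₁,…,w_l). -/
/-!
Number the `N = ∑ w` edges `0, …, N - 1` so that the edges at left vertex `j` form a block of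
`w j` consecutive numbers, and send edge `k` to right vertex `k mod r`. A block has length
`w j ≤ r` (this is where `N ≤ r l` enters), so its residues are distinct and no edge is repeated;
right vertex `i` receives the `⌊N/r⌋ + [i < N mod r]` numbers below `N` that are `≡ i`.
Any sequence with values in `{⌊N/r⌋, ⌊N/r⌋ + 1}` summing to `N` is a permutation of this one,
and relabelling the right vertices realizes it.
-/

open Finset

section Degrees

variable {α β : Type*} [DecidableEq α] [DecidableEq β]

def HasDegrees (E : Finset (α × β)) (d : α → ℕ) (w : β → ℕ) : Prop :=
  (∀ i, #{e ∈ E | e.1 = i} = d i) ∧ ∀ j, #{e ∈ E | e.2 = j} = w j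

theorem HasDegrees.sum_eq [Fintype α] [Fintype β] {E : Finset (α × β)} {d : α → ℕ}
    {w : β → ℕ} (h : HasDegrees E d w) : ∑ i, d i = ∑ j, w j := by
  simp only [← h.1, ← h.2]
  rw [← card_eq_sum_card_fiberwise (fun e _ => mem_univ e.1),
    ← card_eq_sum_card_fiberwise (fun e _ => mem_univ e.2)]

theorem HasDegrees.exists_comp_perm {E : Finset (α × β)} {d : α → ℕ} {w : β → ℕ}
    (h : HasDegrees E d w) (σ : Equiv.Perm α) :
    ∃ E' : Finset (α × β), HasDegrees E' (d ∘ σ) w := by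
  refine ⟨E.map (σ.symm.toEmbedding.prodMap (.refl β)), fun i => ?_, fun j => ?_⟩
  · rw [filter_map, card_map, Function.comp_apply, ← h.1]
    exact congrArg card (filter_congr fun e _ => σ.symm_apply_eq)
  · rw [filter_map, card_map, ← h.2]
    rfl

end Degrees

section NearConstant

variable {ι : Type*} [Fintype ι] {a : ℕ} {v : ι → ℕ}

theorem sum_eq_card_mul_add_card_filter (hv : ∀ i, v i = a ∨ v i = a + 1) :
    ∑ i, v i = Fintype.card ι * a + #{i | v i = a + 1} := by
  rw [card_filter, ← smul_eq_mul, ← card_univ, ← sum_const, ← sum_add_distrib]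
  refine sum_congr rfl fun i _ => ?_
  rcases hv i with h | h <;> simp [h]

theorem le_of_sum_le_mul_card {r : ℕ} (hv : ∀ i, v i = a ∨ v i = a + 1)
    (hsum : ∑ i, v i ≤ r * Fintype.card ι) (i : ι) : v i ≤ r := by
  by_contra! hlt
  have hcard : 0 < Fintype.card ι := Fintype.card_pos_iff.2 ⟨i⟩
  rw [sum_eq_card_mul_add_card_filter hv] at hsum
  rcases hv i with h | h
  · nlinarith
  · have : 0 < #{i | v i = a + 1} := card_pos.2 ⟨i, by simp [h]⟩
    nlinarith

theorem exists_perm_eq_comp {v' : ι → ℕ} (hv : ∀ i, v i = a ∨ v i = a + 1)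
    (hv' : ∀ i, v' i = a ∨ v' i = a + 1) (hsum : ∑ i, v i = ∑ i, v' i) :
    ∃ σ : Equiv.Perm ι, ∀ i, v' (σ i) = v i := by
  have hcard : Fintype.card {i // v i = a + 1} = Fintype.card {i // v' i = a + 1} := by
    rw [Fintype.card_subtype, Fintype.card_subtype]
    rw [sum_eq_card_mul_add_card_filter hv, sum_eq_card_mul_add_card_filter hv'] at hsum
    omega
  have hcard' : Fintype.card {i // ¬v i = a + 1} = Fintype.card {i // ¬v' i = a + 1} := by
    rw [Fintype.card_subtype_compl, Fintype.card_subtype_compl, hcard]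
  set e := Fintype.equivOfCardEq hcard
  set e' := Fintype.equivOfCardEq hcard'
  refine ⟨Equiv.subtypeCongr e e', fun i => ?_⟩
  rw [Equiv.subtypeCongr, Equiv.trans_apply, Equiv.trans_apply]
  by_cases h : v i = a + 1
  · rw [Equiv.sumCompl_symm_apply_of_pos (p := fun i => v i = a + 1) h, h]
    exact (e ⟨i, h⟩).2
  · rw [Equiv.sumCompl_symm_apply_of_neg (p := fun i => v i = a + 1) h]
    change v' (e' ⟨i, h⟩ : ι) = v i
    have hne := (e' ⟨i, h⟩).2
    rcases hv i with h₁ | h₁ <;> rcases hv' (e' ⟨i, h⟩) with h₂ | h₂ <;> omega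

end NearConstant

theorem card_filter_sigma_fst_eq {α : Type*} [Fintype α] [DecidableEq α] {β : α → Type*}
    [∀ a, Fintype (β a)] (a : α) : #{p : Σ a, β a | p.1 = a} = Fintype.card (β a) := by
  rw [← Fintype.card_subtype, Fintype.card_congr (Equiv.sigmaSubtype a)]

theorem exists_hasDegrees_count_modEq {r l : ℕ} (hr : 0 < r) (w : Fin l → ℕ)
    (hw : ∀ j, w j ≤ r) :
    ∃ E : Finset (Fin r × Fin l), HasDegrees E (fun i => (∑ j, w j).count (· ≡ i [MOD r])) w := by
  set e : (Σ j, Fin (w j)) ≃ Fin (∑ j, w j) := finSigmaFinEquiv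
  let edge : (Σ j, Fin (w j)) → Fin r × Fin l := fun p => (⟨e p % r, Nat.mod_lt _ hr⟩, p.1)
  have hedge : edge.Injective := by
    rintro ⟨j, s⟩ ⟨j', t⟩ h
    simp only [edge, Prod.mk.injEq, Fin.mk.injEq] at h
    obtain ⟨hst, rfl⟩ := h
    simp only [e, finSigmaFinEquiv_apply] at hst
    have : s = t := Fin.val_injective <| (Nat.ModEq.add_left_cancel' _ hst).eq_of_lt_of_lt
      (s.2.trans_le (hw j)) (t.2.trans_le (hw j))
    rw [this]
  refine ⟨univ.map ⟨edge, hedge⟩, fun i => ?_, fun j => ?_⟩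
  · rw [filter_map, card_map]
    dsimp only
    have hmod (k : ℕ) : k ≡ i [MOD r] ↔ k % r = i := by rw [Nat.ModEq, Nat.mod_eq_of_lt i.2]
    rw [Nat.count_eq_card_filter_range]
    refine card_bij' (fun p _ => e p) (fun k hk => e.symm ⟨k, by simp_all⟩) ?_ ?_
      (by simp) (by simp) <;> simp [edge, Fin.ext_iff, hmod]
  · rw [filter_map, card_map]
    exact (card_filter_sigma_fst_eq j).trans (Fintype.card_fin _)

theorem stmt_1_general (r l N : ℕ) (hr : 0 < r) (hNrl : N ≤ r * l)
    (v : Fin r → ℕ) (w : Fin l → ℕ)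
    (hv : ∑ i, v i = N) (hw : ∑ j, w j = N)
    (hv' : ∀ i, v i = N / r ∨ v i = N / r + 1)
    (hw' : ∀ j, w j = N / l ∨ w j = N / l + 1) :
    ∃ E : Finset (Fin r × Fin l),
      (∀ i, (E.filter fun e => e.1 = i).card = v i) ∧
      (∀ j, (E.filter fun e => e.2 = j).card = w j) := by
  have hwr : ∀ j, w j ≤ r :=
    le_of_sum_le_mul_card hw' (by rwa [hw, Fintype.card_fin])
  obtain ⟨E, hE⟩ := exists_hasDegrees_count_modEq hr w hwr
  rw [hw] at hE
  have hcount (i : Fin r) :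
      N.count (· ≡ i [MOD r]) = N / r ∨ N.count (· ≡ i [MOD r]) = N / r + 1 := by
    rw [Nat.count_modEq_card _ hr]
    split_ifs <;> simp
  obtain ⟨σ, hσ⟩ := exists_perm_eq_comp hv' hcount (by rw [hE.sum_eq, hv, hw])
  obtain ⟨E', hE'⟩ := hE.exists_comp_perm σ
  simp only [Function.comp_def, hσ] at hE'
  exact ⟨E', hE'⟩

/-- Given degree sequences `(v i)` on `r` right vertices and `(w j)` on `l` left vertices,
each summing to `N ≤ r * l`, with every `v i ∈ {⌊N/r⌋, ⌊N/r⌋+1}` and every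
`w j ∈ {⌊N/l⌋, ⌊N/l⌋+1}`, there is a bipartite graph realizing these degree sequences. -/
theorem stmt_1 (r l N : ℕ) (hr : 0 < r) (hl : 0 < l) (hNrl : N ≤ r * l)
    (v : Fin r → ℕ) (w : Fin l → ℕ)
    (hv : ∑ i, v i = N) (hw : ∑ j, w j = N)
    (hv' : ∀ i, v i = N / r ∨ v i = N / r + 1)
    (hw' : ∀ j, w j = N / l ∨ w j = N / l + 1) :
    ∃ E : Finset (Fin r × Fin l),
      (∀ i, (E.filter fun e => e.1 = i).card = v i) ∧
      (∀ j, (E.filter fun e => e.2 = j).card = w j) :=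
  stmt_1_general r l N hr hNrl v w hv hw hv' hw'
end

section
/- Let a, b ≥ 2 be integers and let h, k be integers with h ≥ a, k ≤ −2. Write h = α + m·a with −1 ≤ α ≤ a−2 and k = β − n·b with −1 ≤ β ≤ b−2 (such m, n, α, β exist and are unique). Set d = hb + ka and g = (a−1)(b−1). Assume ab − a − b − min(a,b) < d ≤ g − 1 and (α, β) ≠ (−1, −1). Then m = n. -/
/-! Write `d = αb + βa + (m - n)ab`. If `m < n`, the upper residue bounds give
`d ≤ ab - 2a - 2b`, below the lower bound on `d`. If `m > n`, the lower residue bounds together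
with `(α, β) ≠ (-1, -1)` give `d ≥ ab - max a b > g - 1`. -/

section Residues

variable {a b α β t : ℤ}

theorem residue_combination_le_of_neg (ha : 0 ≤ a) (hb : 0 ≤ b)
    (hα' : α ≤ a - 2) (hβ' : β ≤ b - 2) (ht : t < 0) :
    α * b + β * a + t * (a * b) ≤ a * b - 2 * a - 2 * b := by
  have hαb : α * b ≤ (a - 2) * b := mul_le_mul_of_nonneg_right hα' hb
  have hβa : β * a ≤ (b - 2) * a := mul_le_mul_of_nonneg_right hβ' ha
  have htab : t * (a * b) ≤ -1 * (a * b) :=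
    mul_le_mul_of_nonneg_right (by omega) (mul_nonneg ha hb)
  linarith

theorem lt_residue_combination_of_pos (ha : 0 < a) (hb : 0 < b)
    (hα : -1 ≤ α) (hβ : -1 ≤ β) (hne : ¬(α = -1 ∧ β = -1)) (ht : 0 < t) :
    a * b - a - b < α * b + β * a + t * (a * b) := by
  have htab : 1 * (a * b) ≤ t * (a * b) :=
    mul_le_mul_of_nonneg_right (by omega) (mul_pos ha hb).le
  rcases not_and_or.mp hne with hα0 | hβ0
  · have hαb : 0 * b ≤ α * b := mul_le_mul_of_nonneg_right (by omega) hb.le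
    have hβa : -1 * a ≤ β * a := mul_le_mul_of_nonneg_right hβ ha.le
    linarith
  · have hαb : -1 * b ≤ α * b := mul_le_mul_of_nonneg_right hα hb.le
    have hβa : 0 * a ≤ β * a := mul_le_mul_of_nonneg_right (by omega) ha.le
    linarith

end Residues

theorem stmt_6_general (a b h k α β m n d g : ℤ) (ha : 2 ≤ a) (hb : 2 ≤ b)
    (hα : -1 ≤ α) (hα' : α ≤ a - 2) (hβ : -1 ≤ β) (hβ' : β ≤ b - 2)
    (hm : h = α + m * a) (hn : k = β - n * b)
    (hd : d = h * b + k * a) (hg : g = (a - 1) * (b - 1))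
    (h1 : a * b - a - b - min a b < d) (h2 : d ≤ g - 1)
    (hne : ¬(α = -1 ∧ β = -1)) : m = n := by
  have hd' : d = α * b + β * a + (m - n) * (a * b) := by
    rw [hd, hm, hn]; ring
  have hg' : g - 1 = a * b - a - b := by rw [hg]; ring
  rcases lt_trichotomy (m - n) 0 with hlt | heq | hgt
  · have hd_le := residue_combination_le_of_neg (by omega : 0 ≤ a) (by omega : 0 ≤ b) hα' hβ' hlt
    have hmin := min_le_left a b
    linarith
  · omega
  · have hd_gt := lt_residue_combination_of_pos (by omega : 0 < a) (by omega : 0 < b) hα hβ hne hgt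
    linarith

/-- With `a, b ≥ 2`, `h = α + m·a` (`-1 ≤ α ≤ a-2`), `k = β - n·b` (`-1 ≤ β ≤ b-2`),
`h ≥ a`, `k ≤ -2`, `d = hb + ka`, `g = (a-1)(b-1)`,
`ab - a - b - min a b < d ≤ g - 1` and `(α, β) ≠ (-1, -1)`, one has `m = n`. -/
theorem stmt_6 (a b h k α β m n d g : ℤ) (ha : 2 ≤ a) (hb : 2 ≤ b)
    (hh : a ≤ h) (hk : k ≤ -2)
    (hα : -1 ≤ α) (hα' : α ≤ a - 2) (hβ : -1 ≤ β) (hβ' : β ≤ b - 2)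
    (hm : h = α + m * a) (hn : k = β - n * b)
    (hd : d = h * b + k * a) (hg : g = (a - 1) * (b - 1))
    (h1 : a * b - a - b - min a b < d) (h2 : d ≤ g - 1)
    (hne : ¬(α = -1 ∧ β = -1)) : m = n :=
  stmt_6_general a b h k α β m n d g ha hb hα hα' hβ hβ' hm hn hd hg h1 h2 hne
end

section
/- Let a, b ≥ 2, and let l(u) = (u−λ₁)⋯(u−λ_a) and m(v) = (v−μ₁)⋯(v−μ_b) with all λ_i distinct and nonzero and all μ_j distinct and nonzero. Then there exists a polynomial h(u) of degree a, with no multiple roots, sharing no root with l(u), such that the affine curve C = {(u,v) ∈ ℂ² : l(u)v^b − h(u)m(v) = 0} is smooth, i.e., at no point of C do both partial derivatives of f(u,v) = l(u)v^b − h(u)m(v) vanish. -/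
/-!
Take `h = l - c` for a constant `c`. Then `f = l(u) (v^b - m(v)) + c m(v)` and
`f_u = l'(u) (v^b - m(v))`. At a singular point, `v^b = m(v)` would force `m(v) = 0 = v`, impossible
as `m(0) ≠ 0`; so `u` is a critical point of `l`. If `c` is not a critical value of `l`, eliminating
`l(u) - c` between `f = 0` and `f_v = 0` shows that `v` is a root of `v m'(v) - b m(v)` and that
`c = l(u) - l(u) v^b / m(v)`. Both `u` and `v` then range over finite sets, so all but finitely
many `c` give a smooth curve; such a `c` also makes `l - c` squarefree.
-/

open Polynomial

namespace SmoothCurve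

variable {K : Type*} [Field K]

open scoped Classical

noncomputable def criticalValues (p : K[X]) : Finset K :=
  (derivative p).roots.toFinset.image fun x => p.eval x

/-- The constants `c` for which the curve `l(u) v^b = (l(u) - c) m(v)` may be singular. -/
noncomputable def exceptionalValues (l m : K[X]) (b : ℕ) : Finset K :=
  insert 0 (criticalValues l ∪
    ((derivative l).roots.toFinset ×ˢ (X * derivative m - C (b : K) * m).roots.toFinset).image
      fun p => l.eval p.1 - l.eval p.1 * p.2 ^ b / m.eval p.2)

theorem eval_ne_of_notMem_criticalValues {p : K[X]} {c x : K} (hp : derivative p ≠ 0)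
    (hc : c ∉ criticalValues p) (hx : (derivative p).eval x = 0) : p.eval x ≠ c :=
  fun hxc => hc <| Finset.mem_image.2 ⟨x, Multiset.mem_toFinset.2 ((mem_roots hp).2 hx), hxc⟩

theorem squarefree_sub_C_of_forall_eval_ne [IsAlgClosed K] {p : K[X]} {c : K}
    (hc : ∀ x, (derivative p).eval x = 0 → p.eval x ≠ c) : Squarefree (p - C c) := by
  refine Separable.squarefree ?_
  rw [separable_def, derivative_sub, derivative_C, sub_zero,
    isCoprime_iff_aeval_ne_zero_of_isAlgClosed K K]
  intro x
  simp only [coe_aeval_eq_eval, eval_sub, eval_C, sub_ne_zero]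
  by_contra! hx
  exact hc x hx.2 hx.1

theorem X_mul_derivative_sub_C_mul_ne_zero {m : K[X]} {b : ℕ} (hm0 : m.eval 0 ≠ 0)
    (hb : (b : K) ≠ 0) : X * derivative m - C (b : K) * m ≠ 0 := fun h => by
  simpa [hb, hm0] using congr_arg (eval 0) h

variable {l m : K[X]} {b : ℕ} {c u v : K}

theorem derivative_eval_eq_zero_of_singular (hc0 : c ≠ 0) (hm0 : m.eval 0 ≠ 0) (hb : b ≠ 0)
    (hf : l.eval u * v ^ b - (l.eval u - c) * m.eval v = 0)
    (hfu : (derivative l).eval u * v ^ b - (derivative l).eval u * m.eval v = 0) :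
    (derivative l).eval u = 0 := by
  have hfu' : (derivative l).eval u * (v ^ b - m.eval v) = 0 := by linear_combination hfu
  refine (mul_eq_zero.1 hfu').resolve_right fun hvM => ?_
  have hM : m.eval v = 0 :=
    (mul_eq_zero.1 (by linear_combination hf - l.eval u * hvM : c * m.eval v = 0)).resolve_left hc0
  have hv : v = 0 := (pow_eq_zero_iff hb).1 (by linear_combination hvM + hM)
  exact hm0 (hv ▸ hM)

theorem not_singular_of_notMem_exceptionalValues (hl : derivative l ≠ 0) (hm : m.Separable)
    (hm0 : m.eval 0 ≠ 0) (hb : (b : K) ≠ 0) (hc : c ∉ exceptionalValues l m b)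
    (hf : l.eval u * v ^ b - (l - C c).eval u * m.eval v = 0) :
    ¬((derivative l).eval u * v ^ b - (derivative (l - C c)).eval u * m.eval v = 0 ∧
      l.eval u * ((b : K) * v ^ (b - 1)) - (l - C c).eval u * (derivative m).eval v = 0) := by
  rintro ⟨hfu, hfv⟩
  simp only [derivative_sub, derivative_C, sub_zero, eval_sub, eval_C] at hf hfu hfv
  simp only [exceptionalValues, Finset.mem_insert, Finset.mem_union, not_or] at hc
  obtain ⟨hc0, hcrit, hc⟩ := hc
  obtain ⟨k, rfl⟩ : ∃ k, b = k + 1 := Nat.exists_eq_succ_of_ne_zero (by rintro rfl; simp at hb)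
  have hu := derivative_eval_eq_zero_of_singular hc0 hm0 k.succ_ne_zero hf hfu
  have hLc := eval_ne_of_notMem_criticalValues hl hcrit hu
  have hv : v ≠ 0 := by
    rintro rfl
    simp [sub_eq_zero, hLc, hm0] at hf
  have hM : m.eval v ≠ 0 := by
    intro hM
    have hL : l.eval u = 0 := by simpa [hM, hv] using hf
    exact hm.aeval_derivative_ne_zero (x := v) (by simpa using hM) (by simpa [hL, hc0] using hfv)
  have hL : l.eval u ≠ 0 := by
    intro hL
    simp [hL, hc0, hM] at hf
  have hq : (X * derivative m - C ((k + 1 : ℕ) : K) * m).eval v = 0 := by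
    have : l.eval u * v ^ k * (v * (derivative m).eval v - (k + 1 : K) * m.eval v) = 0 := by
      push_cast at hfv
      linear_combination (derivative m).eval v * hf - m.eval v * hfv
    simpa [hL, hv] using this
  refine hc (Finset.mem_image.2 ⟨(u, v), Finset.mem_product.2
    ⟨Multiset.mem_toFinset.2 ((mem_roots hl).2 hu),
      Multiset.mem_toFinset.2 ((mem_roots (X_mul_derivative_sub_C_mul_ne_zero hm0 hb)).2 hq)⟩, ?_⟩)
  field_simp
  linear_combination -hf

end SmoothCurve

open SmoothCurve

open Polynomial in
theorem stmt_13_general (a b : ℕ) (ha : 2 ≤ a) (hb : 2 ≤ b)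
    (lam : Fin a → ℂ) (mu : Fin b → ℂ)
    (hmu : Function.Injective mu)
    (hmu0 : ∀ j, mu j ≠ 0) :
    ∃ h : Polynomial ℂ, h.degree = a ∧ Squarefree h ∧
      (∀ x : ℂ, h.eval x = 0 → (∏ i, (X - C (lam i))).eval x ≠ 0) ∧
      ∀ u v : ℂ,
        (∏ i, (X - C (lam i))).eval u * v ^ b
          - h.eval u * (∏ j, (X - C (mu j))).eval v = 0 →
        ¬(((derivative (∏ i, (X - C (lam i)))).eval u * v ^ b
              - (derivative h).eval u * (∏ j, (X - C (mu j))).eval v = 0) ∧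
          ((∏ i, (X - C (lam i))).eval u * ((b : ℂ) * v ^ (b - 1))
              - h.eval u * (derivative (∏ j, (X - C (mu j)))).eval v = 0)) := by
  set l : ℂ[X] := ∏ i, (X - C (lam i))
  set m : ℂ[X] := ∏ j, (X - C (mu j))
  have hl : l.natDegree = a := by simp [l]
  have hl' : derivative l ≠ 0 := derivative_ne_zero.2 (by omega)
  have hm0 : m.eval 0 ≠ 0 := by simp [m, eval_prod, Finset.prod_eq_zero_iff, hmu0]
  have hb0 : (b : ℂ) ≠ 0 := by exact_mod_cast (by omega : b ≠ 0)
  obtain ⟨c, hc⟩ := Infinite.exists_notMem_finset (exceptionalValues l m b)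
  have hcrit : c ∉ criticalValues l := fun h => hc (by simp [exceptionalValues, h])
  have hc0 : c ≠ 0 := fun h => hc (by simp [exceptionalValues, h])
  refine ⟨l - C c, ?_, squarefree_sub_C_of_forall_eval_ne fun x hx =>
      eval_ne_of_notMem_criticalValues hl' hcrit hx, fun x hx hlx => ?_, fun u v =>
      not_singular_of_notMem_exceptionalValues hl' (separable_prod_X_sub_C_iff.2 hmu) hm0 hb0 hc⟩
  · rw [degree_eq_iff_natDegree_eq_of_pos (by omega), natDegree_sub_C, hl]
  · simp [hlx, hc0] at hx

open Polynomial in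
/-- For `l(u) = ∏ (u - λᵢ)` and `m(v) = ∏ (v - μⱼ)` with the `λᵢ` distinct and nonzero and
the `μⱼ` distinct and nonzero (`a, b ≥ 2`), there exists `h(u)` of degree `a`, squarefree,
sharing no root with `l`, such that the affine curve `l(u)v^b - h(u)m(v) = 0` is smooth:
at no point of the curve do both partial derivatives vanish. -/
theorem stmt_13 (a b : ℕ) (ha : 2 ≤ a) (hb : 2 ≤ b)
    (lam : Fin a → ℂ) (mu : Fin b → ℂ)
    (hlam : Function.Injective lam) (hmu : Function.Injective mu)
    (hlam0 : ∀ i, lam i ≠ 0) (hmu0 : ∀ j, mu j ≠ 0) :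
    ∃ h : Polynomial ℂ, h.degree = a ∧ Squarefree h ∧
      (∀ x : ℂ, h.eval x = 0 → (∏ i, (X - C (lam i))).eval x ≠ 0) ∧
      ∀ u v : ℂ,
        (∏ i, (X - C (lam i))).eval u * v ^ b
          - h.eval u * (∏ j, (X - C (mu j))).eval v = 0 →
        ¬(((derivative (∏ i, (X - C (lam i)))).eval u * v ^ b
              - (derivative h).eval u * (∏ j, (X - C (mu j))).eval v = 0) ∧
          ((∏ i, (X - C (lam i))).eval u * ((b : ℂ) * v ^ (b - 1))
              - h.eval u * (derivative (∏ j, (X - C (mu j)))).eval v = 0)) :=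
  stmt_13_general a b ha hb lam mu hmu hmu0
end
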